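/- arXiv:1401.7696 — 6 statements merged into one kernel-verified Lean document; each statement's English description precedes it below -/
import Mathlib

section
/- For relatively prime positive integers m and n, the ℤ-linear extension of X^i ⊗ Y^j ↦ t^{ni+mj} gives a ring isomorphism ℤ[X]/Φ_m(X) ⊗ ℤ[Y]/Φ_n(Y) ≅ ℤ[t]/Φ_{mn}(t), where Φ_k denotes the k-th cyclotomic polynomial. -/
/-!
Since `Φₘₙ(t)` divides both `Φₘ(tⁿ)` and `Φₙ(tᵐ)`, the assignment `X ↦ tⁿ`, `Y ↦ tᵐ` defines a
ring map from the tensor product. Its image contains `t = t ^ (n · n^(φ m - 1) + m · m^(φ n - 1))`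
(Euler: `n^φ(m) + m^φ(n) ≡ 1 mod mn`), so it is surjective; both sides are free of rank
`φ(m) φ(n) = φ(mn)`, and a surjection between finite free modules of the same rank over a
commutative ring is bijective.
-/

open Polynomial TensorProduct
open scoped Nat

theorem Nat.pow_totient_add_pow_totient_modEq_one {m n : ℕ} (hm : 0 < m) (hn : 0 < n)
    (hmn : m.Coprime n) : n ^ φ m + m ^ φ n ≡ 1 [MOD m * n] := by
  have pow_totient_modEq_zero {a b : ℕ} (hb : 0 < b) : a ^ φ b ≡ 0 [MOD a] :=
    Nat.modEq_zero_iff_dvd.mpr (dvd_pow_self a (Nat.totient_pos.mpr hb).ne')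
  rw [← Nat.modEq_and_modEq_iff_modEq_mul hmn]
  constructor
  · simpa using (Nat.ModEq.pow_totient hmn.symm).add (pow_totient_modEq_zero hn)
  · simpa using (pow_totient_modEq_zero hm).add (Nat.ModEq.pow_totient hmn)

theorem exists_pow_mul_add_mul_eq_self {M : Type*} [Monoid M] {x : M} {m n : ℕ} (hm : 0 < m)
    (hn : 0 < n) (hmn : m.Coprime n) (hx : x ^ (m * n) = 1) :
    ∃ a b : ℕ, x ^ (n * a + m * b) = x := by
  refine ⟨n ^ (φ m - 1), m ^ (φ n - 1), ?_⟩
  have hfin : IsOfFinOrder x := isOfFinOrder_iff_pow_eq_one.mpr ⟨_, Nat.mul_pos hm hn, hx⟩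
  rw [← pow_succ', ← pow_succ', Nat.sub_add_cancel (Nat.totient_pos.mpr hm),
    Nat.sub_add_cancel (Nat.totient_pos.mpr hn), ← pow_one x, ← pow_mul, one_mul,
    hfin.pow_eq_pow_iff_modEq]
  exact (Nat.pow_totient_add_pow_totient_modEq_one hm hn hmn).of_dvd
    (orderOf_dvd_of_pow_eq_one hx)

namespace Polynomial

variable (R : Type*) [CommRing R]

theorem cyclotomic_mul_dvd_expand_cyclotomic {m n : ℕ} (hm : 0 < m) (hn : 0 < n) :
    cyclotomic (m * n) R ∣ expand R n (cyclotomic m R) := by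
  have hmn : 0 < m * n := Nat.mul_pos hm hn
  obtain ⟨ζ, hζ⟩ : ∃ ζ : ℂ, IsPrimitiveRoot ζ (m * n) :=
    ⟨_, Complex.isPrimitiveRoot_exp (m * n) hmn.ne'⟩
  have hroot : aeval ζ (expand ℚ n (cyclotomic m ℚ)) = 0 := by
    rw [aeval_def, ← eval_map, map_expand, map_cyclotomic, expand_eval]
    exact (hζ.pow hmn (Nat.mul_comm m n)).isRoot_cyclotomic hm
  have hdvd_rat : cyclotomic (m * n) ℚ ∣ expand ℚ n (cyclotomic m ℚ) := by
    rw [cyclotomic_eq_minpoly_rat hζ hmn]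
    exact minpoly.dvd ℚ ζ hroot
  have hdvd_int : cyclotomic (m * n) ℤ ∣ expand ℤ n (cyclotomic m ℤ) := by
    rwa [← map_cyclotomic_int (m * n) ℚ, ← map_cyclotomic_int m ℚ, ← map_expand,
      map_dvd_map (Int.castRingHom ℚ) Int.cast_injective (cyclotomic.monic _ _)] at hdvd_rat
  simpa only [map_cyclotomic, map_expand] using map_dvd (Int.castRingHom R) hdvd_int

end Polynomial

namespace AdjoinRoot

variable {R : Type*} [CommRing R]

instance (k : ℕ) : Module.Free R (AdjoinRoot (cyclotomic k R)) :=
  (cyclotomic.monic k R).free_adjoinRoot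

instance (k : ℕ) : Module.Finite R (AdjoinRoot (cyclotomic k R)) :=
  (cyclotomic.monic k R).finite_adjoinRoot

theorem finrank_cyclotomic [Nontrivial R] (k : ℕ) :
    Module.finrank R (AdjoinRoot (cyclotomic k R)) = φ k := by
  rw [(powerBasis' (cyclotomic.monic k R)).finrank, powerBasis'_dim, natDegree_cyclotomic]

theorem root_cyclotomic_pow_self (k : ℕ) : root (cyclotomic k R) ^ k = 1 := by
  rw [← mk_X, ← map_pow, ← sub_eq_zero, ← map_one (mk _), ← map_sub, mk_eq_zero]
  exact cyclotomic.dvd_X_pow_sub_one k R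

theorem aeval_root_pow_cyclotomic {m n : ℕ} (hm : 0 < m) (hn : 0 < n) :
    aeval (root (cyclotomic (m * n) R) ^ n) (cyclotomic m R) = 0 := by
  rw [← expand_aeval, aeval_eq, mk_eq_zero]
  exact cyclotomic_mul_dvd_expand_cyclotomic R hm hn

theorem aeval_root_pow_cyclotomic' {m n : ℕ} (hm : 0 < m) (hn : 0 < n) :
    aeval (root (cyclotomic (m * n) R) ^ m) (cyclotomic n R) = 0 := by
  rw [mul_comm m n]
  exact aeval_root_pow_cyclotomic hn hm

end AdjoinRoot

section CyclotomicTensor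

open AdjoinRoot

variable (R : Type*) [CommRing R] {m n : ℕ} (hm : 0 < m) (hn : 0 < n)

noncomputable def cyclotomicTensorHom :
    AdjoinRoot (cyclotomic m R) ⊗[R] AdjoinRoot (cyclotomic n R) →ₐ[R]
      AdjoinRoot (cyclotomic (m * n) R) :=
  Algebra.TensorProduct.productMap
    (liftAlgHom _ (Algebra.ofId R _) _ <| by
      rw [Algebra.toRingHom_ofId, ← aeval_def]; exact aeval_root_pow_cyclotomic hm hn)
    (liftAlgHom _ (Algebra.ofId R _) _ <| by
      rw [Algebra.toRingHom_ofId, ← aeval_def]; exact aeval_root_pow_cyclotomic' hm hn)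

theorem cyclotomicTensorHom_tmul (i j : ℕ) :
    cyclotomicTensorHom R hm hn ((root (cyclotomic m R) ^ i) ⊗ₜ (root (cyclotomic n R) ^ j)) =
      root (cyclotomic (m * n) R) ^ (n * i + m * j) := by
  simp only [cyclotomicTensorHom, Algebra.TensorProduct.productMap_apply_tmul, map_pow,
    liftAlgHom_root, pow_add, pow_mul]

theorem cyclotomicTensorHom_surjective (hmn : m.Coprime n) :
    Function.Surjective (cyclotomicTensorHom R hm hn) := by
  obtain ⟨a, b, hab⟩ :=
    exists_pow_mul_add_mul_eq_self hm hn hmn (root_cyclotomic_pow_self (R := R) (m * n))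
  have hroot : root _ ∈ (cyclotomicTensorHom R hm hn).range :=
    ⟨_, (cyclotomicTensorHom_tmul R hm hn a b).trans hab⟩
  rwa [← AlgHom.range_eq_top, eq_top_iff, ← adjoinRoot_eq_top, Algebra.adjoin_le_iff,
    Set.singleton_subset_iff]

theorem cyclotomicTensorHom_bijective [Nontrivial R] (hmn : m.Coprime n) :
    Function.Bijective (cyclotomicTensorHom R hm hn) := by
  refine OrzechProperty.bijective_of_surjective_of_finrank_le
    (cyclotomicTensorHom R hm hn).toLinearMap (cyclotomicTensorHom_surjective R hm hn hmn) ?_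
  rw [Module.finrank_tensorProduct, finrank_cyclotomic, finrank_cyclotomic, finrank_cyclotomic,
    Nat.totient_mul hmn]

end CyclotomicTensor

theorem tensor_cyclotomic_iso (m n : ℕ) (hm : 0 < m) (hn : 0 < n)
    (hmn : Nat.Coprime m n) :
    ∃ e : TensorProduct ℤ (ℤ[X] ⧸ Ideal.span {cyclotomic m ℤ})
        (ℤ[X] ⧸ Ideal.span {cyclotomic n ℤ}) ≃+*
        (ℤ[X] ⧸ Ideal.span {cyclotomic (m * n) ℤ}),
      ∀ i j : ℕ,
        e ((Ideal.Quotient.mk (Ideal.span {cyclotomic m ℤ}) (X ^ i)) ⊗ₜ[ℤ]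
            (Ideal.Quotient.mk (Ideal.span {cyclotomic n ℤ}) (X ^ j))) =
          Ideal.Quotient.mk (Ideal.span {cyclotomic (m * n) ℤ}) (X ^ (n * i + m * j)) :=
  ⟨(AlgEquiv.ofBijective _ (cyclotomicTensorHom_bijective ℤ hm hn hmn)).toRingEquiv,
    cyclotomicTensorHom_tmul ℤ hm hn⟩
end

section
/- For relatively prime positive integers m and n, the ℤ-linear extension of X^i ⊗ Y^j ↦ t^{mj+ni} is a ring isomorphism ℤ[X]/Φ_m(X) ⊗ ℤ[Y]/(Y^n−1) ≅ ℤ[t]/(Φ_m(t^n)). -/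
open Polynomial TensorProduct

/-!
Write `u`, `v`, `t` for the classes of the variables. Since `p ∣ X ^ m - 1` (for `p = Φ_m`),
`u ^ m = 1 = v ^ n` and `t ^ (m * n) = 1`, so `u ↦ t ^ n`, `v ↦ t ^ m` defines an algebra map
out of the tensor product. As `m` and `n` are coprime, the Chinese remainder theorem gives
`z = u ^ a v ^ b` with `z ^ n = u` and `z ^ m = v`; then `t ↦ z` is well defined, and the two
maps are inverse because an element is determined by its `n`-th and `m`-th powers once
its `m * n`-th power is `1`.
-/

theorem Nat.exists_mul_modEq_one_of_coprime {m n : ℕ} (h : m.Coprime n) :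
    ∃ a, n * a ≡ 1 [MOD m] := by
  obtain ⟨k, hk₁, hk₀⟩ := Nat.chineseRemainder h 1 0
  obtain ⟨a, rfl⟩ := Nat.modEq_zero_iff_dvd.mp hk₀
  exact ⟨a, hk₁⟩

section Monoid

variable {M : Type*} {m n : ℕ}

theorem exists_pow_eq_and_pow_eq_of_coprime [CommMonoid M] {x y : M} (h : m.Coprime n)
    (hx : x ^ m = 1) (hy : y ^ n = 1) : ∃ z : M, z ^ n = x ∧ z ^ m = y := by
  obtain ⟨a, ha⟩ := Nat.exists_mul_modEq_one_of_coprime h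
  obtain ⟨b, hb⟩ := Nat.exists_mul_modEq_one_of_coprime h.symm
  refine ⟨x ^ a * y ^ b, ?_, ?_⟩
  · rw [mul_pow, ← pow_mul, ← pow_mul, mul_comm a, pow_eq_pow_of_modEq ha hx, mul_comm b,
      pow_mul, hy, one_pow, pow_one, mul_one]
  · rw [mul_pow, ← pow_mul, ← pow_mul, mul_comm b, pow_eq_pow_of_modEq hb hy, mul_comm a,
      pow_mul, hx, one_pow, pow_one, one_mul]

theorem eq_of_pow_eq_of_pow_eq_of_coprime [Monoid M] {w t : M} (h : m.Coprime n)
    (ht : t ^ (m * n) = 1) (hm : w ^ m = t ^ m) (hn : w ^ n = t ^ n) : w = t := by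
  obtain ⟨a, ha⟩ := Nat.exists_mul_modEq_one_of_coprime h
  obtain ⟨b, hb⟩ := Nat.exists_mul_modEq_one_of_coprime h.symm
  have hab : n * a + m * b ≡ 1 [MOD m * n] := by
    refine (Nat.modEq_and_modEq_iff_modEq_mul h).mp ⟨?_, ?_⟩
    · simpa using ha.add (Nat.modEq_zero_iff_dvd.mpr (dvd_mul_right m b))
    · simpa using (Nat.modEq_zero_iff_dvd.mpr (dvd_mul_right n a)).add hb
  have hw : w ^ (m * n) = 1 := by rw [pow_mul, hm, ← pow_mul, ht]
  calc w = w ^ (n * a + m * b) := by rw [pow_eq_pow_of_modEq hab hw, pow_one]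
    _ = t ^ (n * a + m * b) := by
      rw [pow_add, pow_mul, pow_mul, hn, hm, ← pow_mul, ← pow_mul, ← pow_add]
    _ = t := by rw [pow_eq_pow_of_modEq hab ht, pow_one]

end Monoid

theorem Polynomial.comp_X_pow_dvd_X_pow_sub_one {R : Type*} [CommRing R] {p : R[X]} {m : ℕ}
    (hp : p ∣ X ^ m - 1) (n : ℕ) : p.comp (X ^ n) ∣ X ^ (m * n) - 1 := by
  simpa [pow_mul'] using _root_.map_dvd (compRingHom (X ^ n)) hp

namespace AdjoinRoot

variable {R : Type*} [CommRing R] {p : R[X]} {m n : ℕ}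

theorem root_pow_eq_one_of_dvd (hp : p ∣ X ^ m - 1) : root p ^ m = 1 := by
  simpa [sub_eq_zero] using mk_eq_zero.mpr hp

variable (n) in
noncomputable def tensorToCompXPow (hp : p ∣ X ^ m - 1) :
    AdjoinRoot p ⊗[R] AdjoinRoot (X ^ n - 1 : R[X]) →ₐ[R] AdjoinRoot (p.comp (X ^ n)) :=
  Algebra.TensorProduct.productMap
    (liftAlgHom p (Algebra.ofId R _) (root _ ^ n) (by
      rw [Algebra.toRingHom_ofId, ← aeval_def]
      simpa [aeval_comp] using aeval_eq (f := p.comp (X ^ n)) (p.comp (X ^ n))))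
    (liftAlgHom _ (Algebra.ofId R _) (root _ ^ m) (by
      rw [Algebra.toRingHom_ofId, ← aeval_def]
      simp [← pow_mul, root_pow_eq_one_of_dvd (comp_X_pow_dvd_X_pow_sub_one hp n)]))

theorem tensorToCompXPow_root_pow_tmul_root_pow (hp : p ∣ X ^ m - 1) (i j : ℕ) :
    tensorToCompXPow n hp ((root p ^ i) ⊗ₜ (root (X ^ n - 1 : R[X]) ^ j)) =
      root (p.comp (X ^ n)) ^ (n * i + m * j) := by
  rw [tensorToCompXPow, Algebra.TensorProduct.productMap_apply_tmul, map_pow, map_pow,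
    liftAlgHom_root, liftAlgHom_root, pow_add, pow_mul, pow_mul]

theorem tensorToCompXPow_bijective (hp : p ∣ X ^ m - 1) (h : m.Coprime n) :
    Function.Bijective (tensorToCompXPow n hp) := by
  set f := tensorToCompXPow n hp
  have hf_left : f (root p ⊗ₜ 1) = root _ ^ n := by
    simpa using tensorToCompXPow_root_pow_tmul_root_pow hp 1 0
  have hf_right : f (1 ⊗ₜ root _) = root _ ^ m := by
    simpa using tensorToCompXPow_root_pow_tmul_root_pow hp 0 1
  obtain ⟨z, hzn, hzm⟩ := exists_pow_eq_and_pow_eq_of_coprime h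
    (x := root p ⊗ₜ[R] (1 : AdjoinRoot (X ^ n - 1 : R[X]))) (y := 1 ⊗ₜ root _)
    (by rw [Algebra.TensorProduct.tmul_pow, root_pow_eq_one_of_dvd hp, one_pow]; rfl)
    (by rw [Algebra.TensorProduct.tmul_pow, root_pow_eq_one_of_dvd dvd_rfl, one_pow]; rfl)
  have hz : aeval z (p.comp (X ^ n)) = 0 := by
    rw [aeval_comp, map_pow, aeval_X, hzn, ← Algebra.TensorProduct.includeLeft_apply (S := R),
      aeval_algHom_apply, aeval_eq, mk_self, map_zero]
  set g := liftAlgHom (p.comp (X ^ n)) (Algebra.ofId R _) z hz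
  have hg : g (root _) = z := liftAlgHom_root ..
  have hfz : f z = root _ :=
    eq_of_pow_eq_of_pow_eq_of_coprime h
      (root_pow_eq_one_of_dvd (comp_X_pow_dvd_X_pow_sub_one hp n))
      (by rw [← map_pow, hzm, hf_right]) (by rw [← map_pow, hzn, hf_left])
  have hgf : g.comp f = AlgHom.id R _ := by
    ext
    · simp [hf_left, hg, hzn]
    · simp [hf_right, hg, hzm]
  have hfg : f.comp g = AlgHom.id R _ := algHom_ext (by simp [hg, hfz])
  exact Function.bijective_iff_has_inverse.mpr ⟨g, AlgHom.congr_fun hgf, AlgHom.congr_fun hfg⟩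

end AdjoinRoot

theorem tensor_cyclotomic_group_algebra_iso_general (m n : ℕ)
    (hmn : Nat.Coprime m n) :
    ∃ e : TensorProduct ℤ (ℤ[X] ⧸ Ideal.span {cyclotomic m ℤ})
        (ℤ[X] ⧸ Ideal.span {(X : ℤ[X]) ^ n - 1}) ≃+*
        (ℤ[X] ⧸ Ideal.span {(cyclotomic m ℤ).comp (X ^ n)}),
      ∀ i j : ℕ,
        e ((Ideal.Quotient.mk (Ideal.span {cyclotomic m ℤ}) (X ^ i)) ⊗ₜ[ℤ]
            (Ideal.Quotient.mk (Ideal.span {(X : ℤ[X]) ^ n - 1}) (X ^ j))) =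
          Ideal.Quotient.mk (Ideal.span {(cyclotomic m ℤ).comp (X ^ n)})
            (X ^ (m * j + n * i)) := by
  have hdvd := cyclotomic.dvd_X_pow_sub_one m ℤ
  refine ⟨(AlgEquiv.ofBijective _ (AdjoinRoot.tensorToCompXPow_bijective hdvd hmn)).toRingEquiv,
    fun i j => ?_⟩
  have hij := AdjoinRoot.tensorToCompXPow_root_pow_tmul_root_pow (n := n) hdvd i j
  rw [← AdjoinRoot.mk_X, ← AdjoinRoot.mk_X, ← AdjoinRoot.mk_X, ← map_pow, ← map_pow, ← map_pow,
    add_comm] at hij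
  exact hij

theorem tensor_cyclotomic_group_algebra_iso (m n : ℕ) (hm : 0 < m) (hn : 0 < n)
    (hmn : Nat.Coprime m n) :
    ∃ e : TensorProduct ℤ (ℤ[X] ⧸ Ideal.span {cyclotomic m ℤ})
        (ℤ[X] ⧸ Ideal.span {(X : ℤ[X]) ^ n - 1}) ≃+*
        (ℤ[X] ⧸ Ideal.span {(cyclotomic m ℤ).comp (X ^ n)}),
      ∀ i j : ℕ,
        e ((Ideal.Quotient.mk (Ideal.span {cyclotomic m ℤ}) (X ^ i)) ⊗ₜ[ℤ]
            (Ideal.Quotient.mk (Ideal.span {(X : ℤ[X]) ^ n - 1}) (X ^ j))) =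
          Ideal.Quotient.mk (Ideal.span {(cyclotomic m ℤ).comp (X ^ n)})
            (X ^ (m * j + n * i)) :=
  tensor_cyclotomic_group_algebra_iso_general m n hmn
end

section
/- Let A_n be the matrix (with respect to the standard monomial bases) of the canonical map ℤ[X]/(X^n−1) → ⊕_{d|n} ℤ[X]/Φ_d(X). For coprime positive integers m and n, the Smith normal forms satisfy S(A_m ⊗ A_n) = S(A_{mn}), where ⊗ denotes the Kronecker product. -/
open Polynomial Kronecker

/-- Row labels of `Amat n`: pairs `(d, i)` with `d` a divisor of `n` (in increasing
order) and `0 ≤ i < φ(d)`. -/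
def rowPairs (n : ℕ) : List (ℕ × ℕ) :=
  (n.divisors.sort (· ≤ ·)).flatMap fun d => (List.range d.totient).map fun i => (d, i)

/-- The matrix of the canonical map `Ψₙ : ℤ[X]/(Xⁿ−1) → ⊕_{d∣n} ℤ[X]/Φ_d(X)` with
respect to the standard monomial bases: the row indexed by `(d, i)` records, in column
`j`, the coefficient of `X^i` in `X^j mod Φ_d`. -/
noncomputable def Amat (n : ℕ) : Matrix (Fin n) (Fin n) ℤ :=
  Matrix.of fun r c =>
    let p := (rowPairs n).getD (r : ℕ) (1, 0)
    (((X : ℤ[X]) ^ (c : ℕ)) %ₘ cyclotomic p.1 ℤ).coeff p.2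

/-!
`Amat k` is the matrix, in monomial bases, of the `ℤ`-algebra map
`Ψ_k : ℤ[X]/(X^k - 1) → ∏_{d ∣ k} ℤ[X]/Φ_d`, so `Amat m ⊗ₖ Amat n` is the matrix of `Ψ_m ⊗ Ψ_n`.
For coprime `m, n` take `c ≡ 1, c' ≡ 0 (mod m)` and `c ≡ 0, c' ≡ 1 (mod n)`. Then
`X ⊗ 1 ↦ X^c`, `1 ⊗ X ↦ X^c'` is a surjection `ℤ[X]/(X^m - 1) ⊗ ℤ[X]/(X^n - 1) → ℤ[X]/(X^mn - 1)`,
since it sends `X ⊗ X` to `X`. On the other side, for `D ∣ mn` write `D = gcd(D, m) * gcd(D, n)`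
and send the root of `Φ_{gcd(D,m)}`, resp. `Φ_{gcd(D,n)}`, to `ζ^c`, resp. `ζ^c'`, where `ζ` is
the root of `Φ_D`. This gives a surjection onto `∏_{D ∣ mn} ℤ[X]/Φ_D`, since the image contains
the idempotents and `Ψ_{mn}(X)`. Both maps are surjections between free `ℤ`-modules of rank `mn`,
hence isomorphisms, and they intertwine `Ψ_m ⊗ Ψ_n` with `Ψ_{mn}`. So the two matrices represent
the same map in two pairs of bases and differ by unimodular changes of basis.
-/

open Module

open scoped TensorProduct

namespace AdjoinRoot

variable {R : Type*} [CommRing R]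

theorem root_pow_eq_one_of_dvd_s5 {f : R[X]} {k : ℕ} (h : f ∣ X ^ k - 1) : root f ^ k = 1 := by
  have := mk_eq_zero.mpr h
  rwa [map_sub, map_pow, mk_X, map_one, sub_eq_zero] at this

noncomputable def powMap (f g : R[X]) (c : ℕ) (h : g ∣ f.comp (X ^ c)) :
    AdjoinRoot f →ₐ[R] AdjoinRoot g :=
  liftAlgHom f (Algebra.ofId R _) (root g ^ c) <| by
    have := (aeval_eq (f.comp (X ^ c))).trans (mk_eq_zero.mpr h)
    rwa [aeval_comp, aeval_X_pow, aeval_def] at this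

@[simp]
theorem powMap_root (f g : R[X]) (c : ℕ) (h : g ∣ f.comp (X ^ c)) :
    powMap f g c h (root f) = root g ^ c :=
  liftAlgHom_root _ _ _ _

theorem subalgebra_pi_eq_top {ι : Type*} [Fintype ι] [DecidableEq ι] {f : ι → R[X]}
    {S : Subalgebra R (∀ i, AdjoinRoot (f i))} (hsingle : ∀ i, Pi.single i 1 ∈ S)
    (hroot : (fun i => root (f i)) ∈ S) : S = ⊤ := by
  refine eq_top_iff.mpr fun x _ => ?_
  choose p hp using fun i => mk_surjective (x i)
  have hx : x = ∑ i, Pi.single i 1 * aeval (fun i => root (f i)) (p i) := by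
    ext j
    simp only [Finset.sum_apply, Pi.mul_apply, aeval_pi_apply₂, aeval_eq]
    rw [Finset.sum_eq_single j (fun i _ hij => by rw [Pi.single_eq_of_ne hij.symm, zero_mul])
      (by simp), Pi.single_eq_same, one_mul, hp]
  rw [hx]
  refine Subalgebra.sum_mem _ fun i _ => Subalgebra.mul_mem _ (hsingle i) ?_
  simpa using (aeval (⟨_, hroot⟩ : S) (p i)).2

end AdjoinRoot

theorem Polynomial.X_pow_sub_one_dvd_comp_X_pow {R : Type*} [CommRing R] {N k c : ℕ}
    (h : N ∣ k * c) : (X ^ N - 1 : R[X]) ∣ (X ^ k - 1 : R[X]).comp (X ^ c) := by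
  rw [sub_comp, pow_comp, X_comp, one_comp, ← pow_mul, mul_comm]
  exact dvd_pow_sub_one_of_dvd h

theorem Polynomial.cyclotomic_mul_dvd_comp_X_pow {a b c : ℕ} (ha : 0 < a) (hb : 0 < b)
    (hbc : b ∣ c) (hca : c.Coprime a) :
    cyclotomic (a * b) ℤ ∣ (cyclotomic a ℤ).comp (X ^ c) := by
  obtain ⟨ζ, hζ⟩ : ∃ ζ : ℂ, IsPrimitiveRoot ζ (a * b) :=
    ⟨_, Complex.isPrimitiveRoot_exp _ (Nat.mul_pos ha hb).ne'⟩
  obtain ⟨t, rfl⟩ := hbc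
  have hζc : IsPrimitiveRoot (ζ ^ (b * t)) a := by
    rw [pow_mul]
    exact (hζ.pow (Nat.mul_pos ha hb) (mul_comm a b)).pow_of_coprime t
      (Nat.Coprime.coprime_dvd_left (dvd_mul_left t b) hca)
  rw [cyclotomic_eq_minpoly hζ (Nat.mul_pos ha hb)]
  refine minpoly.isIntegrallyClosed_dvd (hζ.isIntegral (Nat.mul_pos ha hb)) ?_
  rw [aeval_comp, aeval_X_pow, aeval_def, eval₂_eq_eval_map, map_cyclotomic]
  exact hζc.isRoot_cyclotomic ha

theorem Polynomial.cyclotomic_dvd_cyclotomic_gcd_comp_X_pow {k l c D : ℕ} (hkl : k.Coprime l)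
    (hD : D ∈ (k * l).divisors) (hck : c.Coprime k) (hlc : l ∣ c) :
    cyclotomic D ℤ ∣ (cyclotomic (D.gcd k) ℤ).comp (X ^ c) := by
  obtain ⟨hDkl, hkl0⟩ := Nat.mem_divisors.mp hD
  have hD_eq : D.gcd k * D.gcd l = D :=
    (Nat.gcd_mul_gcd_eq_iff_dvd_mul_of_coprime hkl).mpr hDkl
  have := cyclotomic_mul_dvd_comp_X_pow
    (Nat.gcd_pos_of_pos_right D (Nat.pos_of_ne_zero (left_ne_zero_of_mul hkl0)))
    (Nat.gcd_pos_of_pos_right D (Nat.pos_of_ne_zero (right_ne_zero_of_mul hkl0)))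
    ((Nat.gcd_dvd_right D l).trans hlc) (hck.coprime_dvd_right (Nat.gcd_dvd_right D k))
  rwa [hD_eq] at this

theorem LinearMap.exists_isUnit_det_mul_toMatrix_mul_eq_reindex {R ι κ ι' κ' : Type*}
    [CommRing R] [Fintype ι] [DecidableEq ι] [Fintype κ] [DecidableEq κ]
    [Fintype ι'] [DecidableEq ι'] [Fintype κ']
    {M N M' N' : Type*} [AddCommGroup M] [Module R M] [AddCommGroup N] [Module R N]
    [AddCommGroup M'] [Module R M'] [AddCommGroup N'] [Module R N']
    (b : Basis ι R M) (c : Basis κ R N) (b' : Basis ι' R M') (c' : Basis κ' R N')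
    (α : M ≃ₗ[R] M') (β : N ≃ₗ[R] N') {f : M →ₗ[R] N} {f' : M' →ₗ[R] N'}
    (h : β.toLinearMap ∘ₗ f = f' ∘ₗ α.toLinearMap) (e₁ : κ' ≃ κ) (e₂ : ι' ≃ ι) :
    ∃ (U : Matrix κ κ R) (V : Matrix ι ι R), IsUnit U.det ∧ IsUnit V.det ∧
      U * toMatrix b c f * V = (toMatrix b' c' f').reindex e₁ e₂ := by
  have hf : f = β.symm.toLinearMap ∘ₗ f' ∘ₗ α.toLinearMap := by
    rw [← h]; ext; simp
  set B := (b'.map α.symm).reindex e₂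
  set C := (c'.map β.symm).reindex e₁
  refine ⟨C.toMatrix c, b.toMatrix B,
    Matrix.isUnit_det_of_left_inverse (c.toMatrix_mul_toMatrix_flip C),
    Matrix.isUnit_det_of_left_inverse (B.toMatrix_mul_toMatrix_flip b), ?_⟩
  rw [basis_toMatrix_mul_linearMap_toMatrix_mul_basis_toMatrix, hf]
  ext i j
  simp [toMatrix_apply, B, C]

theorem LinearMap.bijective_of_surjective_of_card_le {R M N ι κ : Type*} [CommRing R]
    [Nontrivial R] [AddCommGroup M] [Module R M] [AddCommGroup N] [Module R N]
    [Fintype ι] [Fintype κ] (b : Basis ι R M) (c : Basis κ R N)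
    (hcard : Fintype.card ι ≤ Fintype.card κ) {f : M →ₗ[R] N} (hf : Function.Surjective f) :
    Function.Bijective f := by
  have := Module.Free.of_basis b
  have := Module.Free.of_basis c
  have := Module.Finite.of_basis b
  have := Module.Finite.of_basis c
  exact OrzechProperty.bijective_of_surjective_of_finrank_le f hf
    (by rwa [finrank_eq_card_basis b, finrank_eq_card_basis c])

abbrev QuotXPowSubOne (k : ℕ) : Type := AdjoinRoot (X ^ k - 1 : ℤ[X])

abbrev CyclotomicQuot (d : ℕ) : Type := AdjoinRoot (cyclotomic d ℤ)

abbrev CyclotomicPi (k : ℕ) : Type := ∀ d : k.divisors, CyclotomicQuot d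

theorem length_rowPairs (k : ℕ) : (rowPairs k).length = k := by
  simp only [rowPairs, List.length_flatMap, List.length_map, List.length_range]
  rw [← Multiset.sum_coe, ← Multiset.map_coe, Finset.sort_eq, ← Finset.sum_eq_multiset_sum]
  exact Nat.sum_totient k

theorem mem_rowPairs {k : ℕ} {p : ℕ × ℕ} :
    p ∈ rowPairs k ↔ p.1 ∈ k.divisors ∧ p.2 < p.1.totient := by
  simp only [rowPairs, List.mem_flatMap, List.mem_map, Finset.mem_sort, List.mem_range]
  constructor
  · rintro ⟨d, hd, i, hi, rfl⟩
    exact ⟨hd, hi⟩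
  · rintro ⟨hd, hi⟩
    exact ⟨p.1, hd, p.2, hi, rfl⟩

def sigmaOfMemRowPairs {k : ℕ} {p : ℕ × ℕ} (hp : p ∈ rowPairs k) :
    Σ d : k.divisors, Fin (d : ℕ).totient :=
  ⟨⟨p.1, (mem_rowPairs.1 hp).1⟩, ⟨p.2, (mem_rowPairs.1 hp).2⟩⟩

def rowIndex (k : ℕ) (r : Fin k) : Σ d : k.divisors, Fin (d : ℕ).totient :=
  sigmaOfMemRowPairs (p := (rowPairs k).getD r (1, 0)) <| by
    rw [List.getD_eq_getElem _ _ (by rw [length_rowPairs]; exact r.2)]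
    exact List.getElem_mem _

theorem rowIndex_surjective (k : ℕ) : Function.Surjective (rowIndex k) := by
  rintro ⟨⟨d, hd⟩, ⟨i, hi⟩⟩
  obtain ⟨j, hj, hget⟩ := List.mem_iff_getElem.1 ((mem_rowPairs (p := (d, i))).2 ⟨hd, hi⟩)
  refine ⟨⟨j, length_rowPairs k ▸ hj⟩, ?_⟩
  have hgetD : (rowPairs k).getD j (1, 0) = (d, i) := by rw [List.getD_eq_getElem _ _ hj, hget]
  simp only [rowIndex, hgetD]
  rfl

noncomputable def rowIndexEquiv (k : ℕ) : Fin k ≃ Σ d : k.divisors, Fin (d : ℕ).totient :=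
  Equiv.ofBijective (rowIndex k) <| (Fintype.bijective_iff_surjective_and_card _).2
    ⟨rowIndex_surjective k, by
      simp only [Fintype.card_fin, Fintype.card_sigma]
      rw [Finset.sum_coe_sort, Nat.sum_totient]⟩

noncomputable def CyclotomicQuot.basis (d : ℕ) : Basis (Fin d.totient) ℤ (CyclotomicQuot d) :=
  (AdjoinRoot.powerBasis' (cyclotomic.monic d ℤ)).basis.reindex
    (finCongr (natDegree_cyclotomic d ℤ))

theorem CyclotomicQuot.basis_repr_mk (d : ℕ) (p : ℤ[X]) (i : Fin d.totient) :
    (CyclotomicQuot.basis d).repr (AdjoinRoot.mk _ p) i = (p %ₘ cyclotomic d ℤ).coeff i := by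
  rw [CyclotomicQuot.basis, Basis.repr_reindex_apply]
  exact (AdjoinRoot.powerBasisAux'_repr_apply_to_fun _ _ _).trans
    (congrArg (coeff · _) (AdjoinRoot.modByMonicHom_mk _ _))

noncomputable def CyclotomicPi.basis (k : ℕ) : Basis (Fin k) ℤ (CyclotomicPi k) :=
  (Pi.basis fun d : k.divisors => CyclotomicQuot.basis d).reindex (rowIndexEquiv k).symm

namespace QuotXPowSubOne

noncomputable def basis (k : ℕ) (hk : k ≠ 0) : Basis (Fin k) ℤ (QuotXPowSubOne k) :=
  (AdjoinRoot.powerBasis' (by simpa using monic_X_pow_sub_C (1 : ℤ) hk)).basis.reindex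
    (finCongr (by simpa using natDegree_X_pow_sub_C (n := k) (r := (1 : ℤ))))

theorem basis_apply (k : ℕ) (hk : k ≠ 0) (j : Fin k) :
    basis k hk j = AdjoinRoot.root _ ^ (j : ℕ) := by
  simp [basis]

noncomputable def toCyclotomicPi (k : ℕ) : QuotXPowSubOne k →ₐ[ℤ] CyclotomicPi k :=
  AlgHom.pi fun d => AdjoinRoot.algHomOfDvd ℤ _ _ <|
    (cyclotomic.dvd_X_pow_sub_one _ ℤ).trans
      (dvd_pow_sub_one_of_dvd (Nat.dvd_of_mem_divisors d.2))

theorem toCyclotomicPi_root (k : ℕ) :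
    toCyclotomicPi k (AdjoinRoot.root _) =
      fun d : k.divisors => AdjoinRoot.root (cyclotomic (d : ℕ) ℤ) := by
  ext d
  simp [toCyclotomicPi]

theorem toMatrix_toCyclotomicPi (k : ℕ) (hk : k ≠ 0) :
    LinearMap.toMatrix (basis k hk) (CyclotomicPi.basis k) (toCyclotomicPi k).toLinearMap =
      Amat k := by
  ext r j
  rw [LinearMap.toMatrix_apply, CyclotomicPi.basis, Basis.repr_reindex_apply, Equiv.symm_symm,
    Pi.basis_repr, AlgHom.toLinearMap_apply, basis_apply]
  have hcomponent : toCyclotomicPi k (AdjoinRoot.root _ ^ (j : ℕ)) (rowIndexEquiv k r).1 =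
      AdjoinRoot.mk _ (X ^ (j : ℕ)) := by
    simp [toCyclotomicPi]
  rw [hcomponent, CyclotomicQuot.basis_repr_mk]
  rfl

end QuotXPowSubOne

section CRT

variable {m n : ℕ}

def crtExponent (hmn : m.Coprime n) : ℕ := Nat.chineseRemainder hmn 1 0

theorem crtExponent_modEq_one (hmn : m.Coprime n) : crtExponent hmn ≡ 1 [MOD m] :=
  (Nat.chineseRemainder hmn 1 0).2.1

theorem dvd_crtExponent (hmn : m.Coprime n) : n ∣ crtExponent hmn :=
  Nat.modEq_zero_iff_dvd.1 (Nat.chineseRemainder hmn 1 0).2.2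

theorem coprime_crtExponent (hmn : m.Coprime n) : (crtExponent hmn).Coprime m := by
  simpa using (crtExponent_modEq_one hmn).gcd_eq

theorem crtExponent_add_crtExponent_symm (hmn : m.Coprime n) :
    crtExponent hmn + crtExponent hmn.symm ≡ 1 [MOD m * n] := by
  refine (Nat.modEq_and_modEq_iff_modEq_mul hmn).1 ⟨?_, ?_⟩
  · simpa using (crtExponent_modEq_one hmn).add
      (Nat.modEq_zero_iff_dvd.2 (dvd_crtExponent hmn.symm))
  · simpa using (Nat.modEq_zero_iff_dvd.2 (dvd_crtExponent hmn)).add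
      (crtExponent_modEq_one hmn.symm)

namespace QuotXPowSubOne

noncomputable def tensorHom (hmn : m.Coprime n) :
    QuotXPowSubOne m ⊗[ℤ] QuotXPowSubOne n →ₐ[ℤ] QuotXPowSubOne (m * n) :=
  Algebra.TensorProduct.productMap
    (AdjoinRoot.powMap _ _ (crtExponent hmn) (X_pow_sub_one_dvd_comp_X_pow
      (Nat.mul_dvd_mul_left m (dvd_crtExponent hmn))))
    (AdjoinRoot.powMap _ _ (crtExponent hmn.symm) (X_pow_sub_one_dvd_comp_X_pow
      (mul_comm n m ▸ Nat.mul_dvd_mul_left n (dvd_crtExponent hmn.symm))))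

theorem tensorHom_root_tmul_root (hmn : m.Coprime n) :
    tensorHom hmn (AdjoinRoot.root _ ⊗ₜ AdjoinRoot.root _) = AdjoinRoot.root _ := by
  rw [tensorHom, Algebra.TensorProduct.productMap_apply_tmul, AdjoinRoot.powMap_root,
    AdjoinRoot.powMap_root, ← pow_add,
    pow_eq_pow_of_modEq (crtExponent_add_crtExponent_symm hmn)
      (AdjoinRoot.root_pow_eq_one_of_dvd_s5 dvd_rfl), pow_one]

theorem tensorHom_surjective (hmn : m.Coprime n) : Function.Surjective (tensorHom hmn) := by
  rw [← AlgHom.range_eq_top, eq_top_iff, ← AdjoinRoot.adjoinRoot_eq_top, Algebra.adjoin_le_iff,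
    Set.singleton_subset_iff]
  exact ⟨_, tensorHom_root_tmul_root hmn⟩

noncomputable def tensorEquiv (hmn : m.Coprime n) (hm : m ≠ 0) (hn : n ≠ 0) :
    (QuotXPowSubOne m ⊗[ℤ] QuotXPowSubOne n) ≃ₗ[ℤ] QuotXPowSubOne (m * n) :=
  LinearEquiv.ofBijective (tensorHom hmn).toLinearMap <|
    LinearMap.bijective_of_surjective_of_card_le ((basis m hm).tensorProduct (basis n hn))
      (basis (m * n) (Nat.mul_ne_zero hm hn)) (by simp) (tensorHom_surjective hmn)

end QuotXPowSubOne

namespace CyclotomicPi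

def gcdDivisor {k N : ℕ} (hkN : k ∣ N) (D : N.divisors) : k.divisors :=
  ⟨(D : ℕ).gcd k, Nat.mem_divisors.2
    ⟨Nat.gcd_dvd_right _ _, ne_zero_of_dvd_ne_zero (Nat.mem_divisors.1 D.2).2 hkN⟩⟩

noncomputable def powMap {k N : ℕ} (hkN : k ∣ N) (c : ℕ)
    (h : ∀ D ∈ N.divisors, cyclotomic D ℤ ∣ (cyclotomic (D.gcd k) ℤ).comp (X ^ c)) :
    CyclotomicPi k →ₐ[ℤ] CyclotomicPi N :=
  AlgHom.pi fun D =>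
    (AdjoinRoot.powMap (cyclotomic (gcdDivisor hkN D : ℕ) ℤ) _ c (h D D.2)).comp
      (Pi.evalAlgHom ℤ _ (gcdDivisor hkN D))

theorem powMap_single_one_apply {k N : ℕ} (hkN : k ∣ N) (c : ℕ)
    (h : ∀ D ∈ N.divisors, cyclotomic D ℤ ∣ (cyclotomic (D.gcd k) ℤ).comp (X ^ c))
    (a : k.divisors) (D : N.divisors) :
    powMap hkN c h (Pi.single a 1) D = if (D : ℕ).gcd k = a then 1 else 0 := by
  simp only [powMap, AlgHom.pi_apply, AlgHom.comp_apply, Pi.evalAlgHom_apply]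
  split_ifs with hD
  · obtain rfl : gcdDivisor hkN D = a := Subtype.ext hD
    rw [Pi.single_eq_same, map_one]
  · rw [Pi.single_eq_of_ne (fun h => hD (by rw [← h]; rfl)), map_zero]

noncomputable def tensorHom (hmn : m.Coprime n) :
    CyclotomicPi m ⊗[ℤ] CyclotomicPi n →ₐ[ℤ] CyclotomicPi (m * n) :=
  Algebra.TensorProduct.productMap
    (powMap (dvd_mul_right m n) (crtExponent hmn) fun _ hD =>
      cyclotomic_dvd_cyclotomic_gcd_comp_X_pow hmn hD (coprime_crtExponent hmn)
        (dvd_crtExponent hmn))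
    (powMap (dvd_mul_left n m) (crtExponent hmn.symm) fun _ hD =>
      cyclotomic_dvd_cyclotomic_gcd_comp_X_pow hmn.symm (mul_comm m n ▸ hD)
        (coprime_crtExponent hmn.symm) (dvd_crtExponent hmn.symm))

theorem tensorHom_comp_map (hmn : m.Coprime n) :
    (tensorHom hmn).comp (Algebra.TensorProduct.map (QuotXPowSubOne.toCyclotomicPi m)
        (QuotXPowSubOne.toCyclotomicPi n)) =
      (QuotXPowSubOne.toCyclotomicPi (m * n)).comp (QuotXPowSubOne.tensorHom hmn) := by
  apply Algebra.TensorProduct.ext <;> apply AdjoinRoot.algHom_ext <;> ext D <;>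
    simp [tensorHom, QuotXPowSubOne.tensorHom, powMap, QuotXPowSubOne.toCyclotomicPi] <;>
    exact AdjoinRoot.powMap_root _ _ _ _

theorem tensorHom_single_one_tmul_single_one (hmn : m.Coprime n) (D : (m * n).divisors) :
    tensorHom hmn (Pi.single (gcdDivisor (dvd_mul_right m n) D) 1 ⊗ₜ
      Pi.single (gcdDivisor (dvd_mul_left n m) D) 1) = Pi.single D 1 := by
  ext D'
  rw [tensorHom, Algebra.TensorProduct.productMap_apply_tmul, Pi.mul_apply,
    powMap_single_one_apply, powMap_single_one_apply, ite_zero_mul_ite_zero, one_mul]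
  have gcd_mul_gcd (E : (m * n).divisors) : (E : ℕ).gcd m * (E : ℕ).gcd n = E :=
    (Nat.gcd_mul_gcd_eq_iff_dvd_mul_of_coprime hmn).2 (Nat.dvd_of_mem_divisors E.2)
  by_cases hD : D' = D
  · subst hD
    rw [if_pos ⟨rfl, rfl⟩, Pi.single_eq_same]
  · rw [Pi.single_eq_of_ne hD, if_neg]
    rintro ⟨hm, hn⟩
    exact hD (Subtype.ext (by rw [← gcd_mul_gcd D', ← gcd_mul_gcd D, hm, hn]; rfl))

theorem tensorHom_surjective (hmn : m.Coprime n) : Function.Surjective (tensorHom hmn) := by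
  rw [← AlgHom.range_eq_top]
  refine AdjoinRoot.subalgebra_pi_eq_top
    (fun D => (AlgHom.mem_range _).2 ⟨_, tensorHom_single_one_tmul_single_one hmn D⟩)
    ((AlgHom.mem_range _).2 ⟨Algebra.TensorProduct.map (QuotXPowSubOne.toCyclotomicPi m)
      (QuotXPowSubOne.toCyclotomicPi n) (AdjoinRoot.root _ ⊗ₜ AdjoinRoot.root _), ?_⟩)
  rw [← AlgHom.comp_apply, tensorHom_comp_map, AlgHom.comp_apply,
    QuotXPowSubOne.tensorHom_root_tmul_root, QuotXPowSubOne.toCyclotomicPi_root]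

noncomputable def tensorEquiv (hmn : m.Coprime n) :
    (CyclotomicPi m ⊗[ℤ] CyclotomicPi n) ≃ₗ[ℤ] CyclotomicPi (m * n) :=
  LinearEquiv.ofBijective (tensorHom hmn).toLinearMap <|
    LinearMap.bijective_of_surjective_of_card_le ((basis m).tensorProduct (basis n))
      (basis (m * n)) (by simp) (tensorHom_surjective hmn)

end CyclotomicPi

end CRT

/-- `S(A_m ⊗ A_n) = S(A_{mn})` for coprime `m`, `n`: the Kronecker product
`A_m ⊗ A_n` and `A_{mn}` have the same Smith normal form, i.e. they are equivalent via
unimodular transformations (after identifying the index types). -/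
theorem smith_kronecker (m n : ℕ) (hm : 0 < m) (hn : 0 < n) (hmn : Nat.Coprime m n) :
    ∃ (U V : Matrix (Fin m × Fin n) (Fin m × Fin n) ℤ)
      (e₁ e₂ : Fin (m * n) ≃ Fin m × Fin n),
      IsUnit U.det ∧ IsUnit V.det ∧
        U * (Amat m ⊗ₖ Amat n) * V = (Amat (m * n)).reindex e₁ e₂ := by
  have hsquare : (CyclotomicPi.tensorEquiv hmn).toLinearMap ∘ₗ
      TensorProduct.map (QuotXPowSubOne.toCyclotomicPi m).toLinearMap
        (QuotXPowSubOne.toCyclotomicPi n).toLinearMap =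
      (QuotXPowSubOne.toCyclotomicPi (m * n)).toLinearMap ∘ₗ
        (QuotXPowSubOne.tensorEquiv hmn hm.ne' hn.ne').toLinearMap :=
    TensorProduct.ext' fun x y => congrArg (· (x ⊗ₜ y)) (CyclotomicPi.tensorHom_comp_map hmn)
  obtain ⟨U, V, hU, hV, h⟩ := LinearMap.exists_isUnit_det_mul_toMatrix_mul_eq_reindex
    ((QuotXPowSubOne.basis m hm.ne').tensorProduct (QuotXPowSubOne.basis n hn.ne'))
    ((CyclotomicPi.basis m).tensorProduct (CyclotomicPi.basis n))
    (QuotXPowSubOne.basis (m * n) (Nat.mul_ne_zero hm.ne' hn.ne')) (CyclotomicPi.basis (m * n))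
    _ _ hsquare finProdFinEquiv.symm finProdFinEquiv.symm
  rw [TensorProduct.toMatrix_map, QuotXPowSubOne.toMatrix_toCyclotomicPi,
    QuotXPowSubOne.toMatrix_toCyclotomicPi, QuotXPowSubOne.toMatrix_toCyclotomicPi] at h
  exact ⟨U, V, _, _, hU, hV, h⟩
end

section
/- If h is a multiplicative arithmetic function and g(n; h) := ∏_{k=1}^{n} h(gcd(k, n)), then for coprime positive integers m and n one has g(mn; h) = g(m; h)^n · g(n; h)^m. -/
/-! Since `m` and `n` are coprime, `gcd(k, mn) = gcd(k, m) · gcd(k, n)` with coprime factors, so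
each factor `h(gcd(k, mn))` splits as `h(gcd(k, m)) · h(gcd(k, n))`. The first of these is
`m`-periodic in `k`, so its product over `1, …, mn` runs `n` times through a full period, giving
`g(m; h)^n`; symmetrically the second gives `g(n; h)^m`. -/

open Finset Function

namespace Function.Periodic

variable {M : Type*} [CommMonoid M] {f : ℕ → M} {a : ℕ}

theorem prod_Ico_add_eq_prod_range (hf : Periodic f a) (n : ℕ) :
    ∏ k ∈ Ico n (n + a), f k = ∏ k ∈ range a, f k := by
  calc ∏ k ∈ Ico n (n + a), f k = ∏ k ∈ Ico n (n + a), f (k % a) :=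
        prod_congr rfl fun k _ => (hf.map_mod_nat k).symm
    _ = ∏ k ∈ range a, f k := by
        simp only [← prod_map_val, range_val, ← Nat.multiset_Ico_map_mod n a, Multiset.map_map,
          comp_def]
        rfl

theorem prod_Ico_add_mul_eq_pow (hf : Periodic f a) (n q : ℕ) :
    ∏ k ∈ Ico n (n + a * q), f k = (∏ k ∈ range a, f k) ^ q := by
  induction q with
  | zero => simp
  | succ q ih =>
    rw [mul_add_one, ← add_assoc, ← prod_Ico_consecutive f (Nat.le_add_right n (a * q))
      (Nat.le_add_right _ a), ih, hf.prod_Ico_add_eq_prod_range, pow_succ]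

end Function.Periodic

theorem Nat.periodic_gcd_left (d : ℕ) : Periodic (fun k => Nat.gcd k d) d :=
  fun k => Nat.gcd_add_self_left d k

theorem gcd_prod_multiplicative_general {M : Type*} [CommMonoid M] (h : ℕ → M)
    (hmul : ∀ a b : ℕ, Nat.Coprime a b → h (a * b) = h a * h b)
    (m n : ℕ) (hmn : Nat.Coprime m n) :
    ∏ k ∈ Finset.Icc 1 (m * n), h (Nat.gcd k (m * n)) =
      (∏ k ∈ Finset.Icc 1 m, h (Nat.gcd k m)) ^ n *
        (∏ k ∈ Finset.Icc 1 n, h (Nat.gcd k n)) ^ m := by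
  have hIcc (N : ℕ) : Icc 1 N = Ico 1 (1 + N) := by
    rw [add_comm, Ico_add_one_right_eq_Icc]
  have hperiodic (d : ℕ) : Periodic (fun k => h (Nat.gcd k d)) d :=
    (Nat.periodic_gcd_left d).comp h
  have hsplit (k : ℕ) : h (Nat.gcd k (m * n)) = h (Nat.gcd k m) * h (Nat.gcd k n) := by
    rw [hmn.gcd_mul k, hmul _ _ (hmn.gcd_both k k)]
  simp only [hIcc, hsplit, prod_mul_distrib, (hperiodic _).prod_Ico_add_eq_prod_range,
    (hperiodic m).prod_Ico_add_mul_eq_pow]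
  rw [mul_comm m n, (hperiodic n).prod_Ico_add_mul_eq_pow]

/-- For a multiplicative function `h` and `g(n; h) = ∏_{k=1}^n h(gcd(k,n))`, one has
`g(mn; h) = g(m; h)^n · g(n; h)^m` for coprime `m`, `n`. -/
theorem gcd_prod_multiplicative {M : Type*} [CommMonoid M] (h : ℕ → M)
    (hmul : ∀ a b : ℕ, Nat.Coprime a b → h (a * b) = h a * h b)
    (m n : ℕ) (hm : 0 < m) (hn : 0 < n) (hmn : Nat.Coprime m n) :
    ∏ k ∈ Finset.Icc 1 (m * n), h (Nat.gcd k (m * n)) =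
      (∏ k ∈ Finset.Icc 1 m, h (Nat.gcd k m)) ^ n *
        (∏ k ∈ Finset.Icc 1 n, h (Nat.gcd k n)) ^ m :=
  gcd_prod_multiplicative_general h hmul m n hmn
end

section
/- Let n have smallest prime divisor p_1. The multiplicity of 1 among the elementary divisors of A_n is n − n/p_1; equivalently, the minimal number of generators of the cokernel G(n) of Ψ_n is n/p_1. -/
/-!
Modulo a prime `p`, write `n = p^k m` with `p ∤ m`. In characteristic `p` we have
`Φ_{p^j e} = Φ_e ^ φ(p^j)`, and the `Φ_e` with `e ∣ m` are pairwise coprime because `X^m - 1` is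
separable, so a polynomial is divisible by every `Φ_d` with `d ∣ n` iff it is divisible by
`(X^m - 1)^φ(p^k)`. The kernel of `Aₙ mod p` therefore consists of the multiples of that
polynomial of degree `< n`, so `Aₙ mod p` has rank `m φ(p^k)`, and exactly `n/p` elementary
divisors are divisible by `p` if `p ∣ n`, none otherwise.

The elementary divisors form a divisibility chain, so those different from `1` are all divisible
by the least prime factor `q` of the first of them; there are at most `n/q ≤ n/p₁` of them, and at
least the `n/p₁` ones divisible by `p₁`.
-/

open Polynomial

open Finset Matrix

namespace Polynomial

variable {R : Type*}

theorem ofFn_toFn_of_degree_lt [Semiring R] [DecidableEq R] {n : ℕ} {f : R[X]} (hf : f.degree < n) :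
    ofFn n (toFn n f) = f := by
  ext i
  by_cases hi : i < n
  · simp [hi, toFn]
  · rw [ofFn_coeff_eq_zero_of_ge _ (not_lt.mp hi),
      coeff_eq_zero_of_degree_lt (hf.trans_le (by exact_mod_cast not_lt.mp hi))]

theorem coeff_ofFn_modByMonic [CommRing R] [DecidableEq R] {k : ℕ} (v : Fin k → R) (q : R[X])
    (i : ℕ) :
    (ofFn k v %ₘ q).coeff i = ∑ c : Fin k, (X ^ (c : ℕ) %ₘ q).coeff i * v c := by
  have hsum : ofFn k v = ∑ c : Fin k, v c • X ^ (c : ℕ) := by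
    simp [ofFn_eq_sum_monomial, smul_eq_C_mul, C_mul_X_pow_eq_monomial]
  rw [← modByMonicHom_apply, hsum, map_sum, finsetSum_coeff]
  simp [mul_comm]

theorem modByMonic_eq_zero_iff_forall_coeff [Ring R] [Nontrivial R] {f q : R[X]} (hq : q.Monic) :
    f %ₘ q = 0 ↔ ∀ i < q.natDegree, (f %ₘ q).coeff i = 0 := by
  refine ⟨fun h i _ => by rw [h, coeff_zero], fun h => ext fun i => ?_⟩
  rw [coeff_zero]
  rcases lt_or_ge i q.natDegree with hi | hi
  · exact h i hi
  · exact coeff_eq_zero_of_degree_lt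
      ((degree_modByMonic_lt f hq).trans_le (degree_le_natDegree.trans (by exact_mod_cast hi)))

theorem degree_mul_lt_iff [Semiring R] [NoZeroDivisors R] {g h : R[X]} {n : ℕ} (hg : g ≠ 0)
    (hdeg : g.natDegree ≤ n) :
    (g * h).degree < n ↔ h.degree < (n - g.natDegree : ℕ) := by
  rcases eq_or_ne h 0 with rfl | hh
  · simp only [mul_zero, degree_zero]
    exact iff_of_true (WithBot.bot_lt_coe _) (WithBot.bot_lt_coe _)
  rw [degree_eq_natDegree (mul_ne_zero hg hh), degree_eq_natDegree hh, natDegree_mul hg hh]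
  norm_cast
  omega

section Cyclotomic

variable {K : Type*} [Field K]

theorem cyclotomic_prime_pow_mul_eq_pow_totient {p m : ℕ} [Fact p.Prime] [CharP K p]
    (hpm : ¬p ∣ m) (k : ℕ) :
    cyclotomic (p ^ k * m) K = cyclotomic m K ^ (p ^ k).totient := by
  rcases k.eq_zero_or_pos with rfl | hk
  · simp
  rw [cyclotomic_mul_prime_pow_eq K hpm hk, Nat.totient_prime_pow Fact.out hk, Nat.mul_sub_one,
    ← pow_succ, Nat.sub_add_cancel hk]

theorem pairwise_isCoprime_cyclotomic {m : ℕ} (hm : (m : K) ≠ 0) :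
    (m.divisors : Set ℕ).Pairwise fun e e' => IsCoprime (cyclotomic e K) (cyclotomic e' K) := by
  intro e he e' he' hne
  have hsep : (X ^ m - 1 : K[X]).Separable := X_pow_sub_one_separable_iff.2 hm
  have hmul : cyclotomic e K * cyclotomic e' K ∣ X ^ m - 1 := by
    rw [← prod_cyclotomic_eq_X_pow_sub_one (Nat.pos_of_ne_zero (by rintro rfl; simp at hm)),
      ← prod_pair (f := fun i => cyclotomic i K) hne]
    exact prod_dvd_prod_of_subset _ _ _ (insert_subset_iff.2 ⟨he, by simpa using he'⟩)
  exact (hsep.of_dvd hmul).isCoprime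

theorem X_pow_sub_one_pow_dvd_iff {m : ℕ} (hm : (m : K) ≠ 0) (N : ℕ) (f : K[X]) :
    (X ^ m - 1) ^ N ∣ f ↔ ∀ e ∈ m.divisors, cyclotomic e K ^ N ∣ f := by
  rw [← prod_cyclotomic_eq_X_pow_sub_one (Nat.pos_of_ne_zero (by rintro rfl; simp at hm)),
    ← prod_pow]
  refine ⟨fun h e he => ?_, fun h => prod_dvd_of_coprime (fun e he e' he' hne => ?_) h⟩
  · exact (dvd_prod_of_mem (fun i => cyclotomic i K ^ N) he).trans h
  · exact (pairwise_isCoprime_cyclotomic hm he he' hne).pow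

theorem forall_cyclotomic_dvd_iff {p n : ℕ} [hp : Fact p.Prime] [CharP K p] (hn : n ≠ 0)
    (f : K[X]) :
    (∀ d ∈ n.divisors, cyclotomic d K ∣ f) ↔
      (X ^ ordCompl[p] n - 1) ^ (ordProj[p] n).totient ∣ f := by
  have hm : ((ordCompl[p] n : ℕ) : K) ≠ 0 := by
    rw [Ne, CharP.cast_eq_zero_iff K p]
    exact Nat.not_dvd_ordCompl hp.out hn
  rw [X_pow_sub_one_pow_dvd_iff hm]
  constructor
  · intro h e he
    have hpe : ¬p ∣ e := fun hpe =>
      Nat.not_dvd_ordCompl hp.out hn (hpe.trans (Nat.dvd_of_mem_divisors he))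
    have hd : ordProj[p] n * e ∈ n.divisors := Nat.mem_divisors.2
      ⟨(Nat.mul_dvd_mul_left _ (Nat.dvd_of_mem_divisors he)).trans
        (Nat.ordProj_mul_ordCompl_eq_self n p).dvd, hn⟩
    simpa only [cyclotomic_prime_pow_mul_eq_pow_totient hpe] using h _ hd
  · intro h d hd
    obtain ⟨hdn, -⟩ := Nat.mem_divisors.1 hd
    have hd0 : d ≠ 0 := ne_zero_of_dvd_ne_zero hn hdn
    rw [← Nat.ordProj_mul_ordCompl_eq_self d p,
      cyclotomic_prime_pow_mul_eq_pow_totient (Nat.not_dvd_ordCompl hp.out hd0)]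
    refine (pow_dvd_pow _ (Nat.le_of_dvd (Nat.totient_pos.2 (Nat.ordProj_pos n p))
      (Nat.totient_dvd_of_dvd (Nat.ordProj_dvd_ordProj_of_dvd hn hdn p)))).trans
        (h _ (Nat.mem_divisors.2 ⟨Nat.ordCompl_dvd_ordCompl_of_dvd hdn p, ?_⟩))
    exact (Nat.ordCompl_pos p hn).ne'

end Cyclotomic

end Polynomial

section Multiples

open Module

variable {K : Type*} [Field K] [DecidableEq K]

theorem finrank_eq_sub_natDegree_of_mem_iff_dvd {n : ℕ} {g : K[X]} (hg : g ≠ 0)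
    (hdeg : g.natDegree ≤ n) (W : Submodule K (Fin n → K)) (hW : ∀ v, v ∈ W ↔ g ∣ ofFn n v) :
    finrank K W = n - g.natDegree := by
  let L : degreeLT K (n - g.natDegree) →ₗ[K] Fin n → K :=
    toFn n ∘ₗ LinearMap.mulLeft K g ∘ₗ (degreeLT K _).subtype
  have hL : ∀ h, ofFn n (L h) = g * h := fun h =>
    ofFn_toFn_of_degree_lt ((degree_mul_lt_iff hg hdeg).2 (mem_degreeLT.1 h.2))
  have hinj : Function.Injective L := fun h h' e =>
    Subtype.ext (mul_left_cancel₀ hg (by rw [← hL, ← hL, e]))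
  have hrange : LinearMap.range L = W := by
    ext v
    rw [hW]
    constructor
    · rintro ⟨h, rfl⟩
      exact ⟨h, hL h⟩
    · rintro ⟨q, hq⟩
      have hq_mem : q ∈ degreeLT K (n - g.natDegree) :=
        mem_degreeLT.2 ((degree_mul_lt_iff hg hdeg).1 (hq ▸ ofFn_degree_lt v))
      refine ⟨⟨q, hq_mem⟩, ?_⟩
      rw [← toFn_comp_ofFn_eq_id n v, hq]
      rfl
  rw [← hrange, LinearMap.finrank_range_of_inj hinj, (degreeLTEquiv K _).finrank_eq,
    finrank_fin_fun]

theorem Matrix.rank_eq_natDegree_of_mulVec_eq_zero_iff {m : Type*} [Fintype m] {n : ℕ}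
    (B : Matrix m (Fin n) K) {g : K[X]} (hg : g ≠ 0) (hdeg : g.natDegree ≤ n)
    (hB : ∀ v, B *ᵥ v = 0 ↔ g ∣ ofFn n v) :
    B.rank = g.natDegree := by
  have hker := finrank_eq_sub_natDegree_of_mem_iff_dvd hg hdeg (LinearMap.ker B.mulVecLin) hB
  have := LinearMap.finrank_range_add_finrank_ker B.mulVecLin
  rw [hker, finrank_fin_fun] at this
  rw [Matrix.rank]
  omega

end Multiples

theorem Matrix.card_filter_dvd_eq_sub_rank {ι : Type*} [Fintype ι] [DecidableEq ι] (p : ℕ)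
    [Fact p.Prime] {A U V : Matrix ι ι ℤ} (D : ι → ℕ) (hU : IsUnit U.det) (hV : IsUnit V.det)
    (hSNF : U * A * V = diagonal fun j => (D j : ℤ)) :
    #{j | p ∣ D j} = Fintype.card ι - (A.map (Int.cast : ℤ → ZMod p)).rank := by
  let f := Int.castRingHom (ZMod p)
  have hunit : ∀ M : Matrix ι ι ℤ, IsUnit M.det → IsUnit (f.mapMatrix M).det := fun M hM => by
    rw [← f.map_det]
    exact hM.map f
  have hrank : (A.map (Int.cast : ℤ → ZMod p)).rank = #{j | ¬p ∣ D j} :=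
    calc (A.map (Int.cast : ℤ → ZMod p)).rank = (f.mapMatrix (U * A * V)).rank := by
          rw [map_mul, map_mul, rank_mul_eq_left_of_isUnit_det _ _ (hunit V hV),
            rank_mul_eq_right_of_isUnit_det _ _ (hunit U hU)]
          rfl
      _ = #{j | ¬p ∣ D j} := by
          rw [hSNF, RingHom.mapMatrix_apply, diagonal_map (map_zero _), rank_diagonal,
            Fintype.card_subtype]
          simp [f, ZMod.natCast_eq_zero_iff]
  have hsplit := card_filter_add_card_filter_not (s := univ) (fun j => p ∣ D j)
  rw [hrank, ← card_univ]
  omega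

theorem Nat.sub_ordCompl_mul_totient_ordProj {p n : ℕ} (hp : p.Prime) (hn : n ≠ 0) :
    n - ordCompl[p] n * (ordProj[p] n).totient = if p ∣ n then n / p else 0 := by
  split_ifs with hpn
  · obtain ⟨j, hj⟩ := Nat.exists_eq_add_of_lt (hp.factorization_pos_of_dvd hn hpn)
    have hn_eq := Nat.ordProj_mul_ordCompl_eq_self n p
    rw [hj, zero_add] at hn_eq ⊢
    generalize n / p ^ (j + 1) = m at hn_eq ⊢
    subst hn_eq
    rw [Nat.totient_prime_pow_succ hp, show p ^ (j + 1) * m = p ^ j * m * p by ring,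
      Nat.mul_div_cancel _ hp.pos, show m * (p ^ j * (p - 1)) = p ^ j * m * (p - 1) by ring,
      Nat.mul_sub_one]
    exact Nat.sub_sub_self (Nat.le_mul_of_pos_right _ hp.pos)
  · simp [Nat.factorization_eq_zero_of_not_dvd hpn]

theorem rowPairs_length (n : ℕ) : (rowPairs n).length = n := by
  simp only [rowPairs, List.length_flatMap, List.length_map, List.length_range]
  rw [((sort_perm_toList _ _).map _).sum_eq, sum_map_toList]
  exact Nat.sum_totient n

theorem mem_rowPairs_s14 {n d i : ℕ} : (d, i) ∈ rowPairs n ↔ d ∈ n.divisors ∧ i < d.totient := by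
  simp [rowPairs]

section Kernel

variable {R : Type*} [CommRing R] [DecidableEq R]

theorem map_Amat_mulVec_apply {n : ℕ} (v : Fin n → R) (r : Fin n) :
    ((Amat n).map (Int.cast : ℤ → R) *ᵥ v) r =
      (ofFn n v %ₘ cyclotomic ((rowPairs n).getD r (1, 0)).1 R).coeff
        ((rowPairs n).getD r (1, 0)).2 := by
  rw [coeff_ofFn_modByMonic, mulVec, dotProduct]
  refine sum_congr rfl fun c _ => ?_
  rw [← map_cyclotomic_int, ← Polynomial.map_X (Int.castRingHom R), ← Polynomial.map_pow,
    ← map_modByMonic _ (cyclotomic.monic _ ℤ), coeff_map]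
  rfl

theorem map_Amat_mulVec_eq_zero_iff [Nontrivial R] {n : ℕ} (v : Fin n → R) :
    (Amat n).map (Int.cast : ℤ → R) *ᵥ v = 0 ↔ ∀ d ∈ n.divisors, cyclotomic d R ∣ ofFn n v := by
  calc _ ↔ ∀ r : Fin n, ((Amat n).map (Int.cast : ℤ → R) *ᵥ v) r = 0 := funext_iff
    _ ↔ ∀ q ∈ rowPairs n, (ofFn n v %ₘ cyclotomic q.1 R).coeff q.2 = 0 := by
      simp only [map_Amat_mulVec_apply, List.forall_mem_iff_getElem, rowPairs_length,
        Fin.forall_iff]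
      exact forall₂_congr fun i hi => by
        rw [List.getD_eq_getElem _ _ (by rwa [rowPairs_length])]
    _ ↔ ∀ d ∈ n.divisors, ∀ i < d.totient, (ofFn n v %ₘ cyclotomic d R).coeff i = 0 := by
      simp only [Prod.forall, mem_rowPairs_s14, and_imp]
      exact ⟨fun h d hd i hi => h d i hd hi, fun h d i hd hi => h d hd i hi⟩
    _ ↔ _ := by
      refine forall₂_congr fun d _ => ?_
      rw [← natDegree_cyclotomic d R, ← modByMonic_eq_zero_iff_forall_coeff (cyclotomic.monic _ R),
        modByMonic_eq_zero_iff_dvd (cyclotomic.monic _ R)]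

end Kernel

theorem rank_map_Amat (K : Type*) [Field K] [DecidableEq K] (p : ℕ) [Fact p.Prime] [CharP K p]
    {n : ℕ} (hn : n ≠ 0) :
    ((Amat n).map (Int.cast : ℤ → K)).rank = ordCompl[p] n * (ordProj[p] n).totient := by
  have hmonic : ((X ^ ordCompl[p] n - 1 : K[X]) ^ (ordProj[p] n).totient).Monic :=
    (monic_X_pow_sub_C 1 (Nat.ordCompl_pos p hn).ne').pow _
  have hdeg : ((X ^ ordCompl[p] n - 1 : K[X]) ^ (ordProj[p] n).totient).natDegree =
      ordCompl[p] n * (ordProj[p] n).totient := by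
    rw [natDegree_pow, ← C_1, natDegree_X_pow_sub_C, mul_comm]
  rw [← hdeg]
  refine rank_eq_natDegree_of_mulVec_eq_zero_iff _ hmonic.ne_zero ?_
    fun v => (map_Amat_mulVec_eq_zero_iff v).trans (forall_cyclotomic_dvd_iff hn _)
  calc _ = ordCompl[p] n * (ordProj[p] n).totient := hdeg
    _ ≤ ordCompl[p] n * ordProj[p] n := Nat.mul_le_mul_left _ (Nat.totient_le _)
    _ = n := by rw [mul_comm, Nat.ordProj_mul_ordCompl_eq_self]

theorem exists_prime_forall_dvd_of_ne_one {ι : Type*} [Fintype ι] [LinearOrder ι] {D : ι → ℕ}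
    (hD : ∀ i j, i ≤ j → D i ∣ D j) : ∃ q, q.Prime ∧ ∀ j, D j ≠ 1 → q ∣ D j := by
  rcases (univ.filter fun j => D j ≠ 1).eq_empty_or_nonempty with hT | hT
  · exact ⟨2, Nat.prime_two, fun j hj => (filter_eq_empty_iff.1 hT (mem_univ j) hj).elim⟩
  have hi₀ : D (min' _ hT) ≠ 1 := (mem_filter.1 (min'_mem _ hT)).2
  exact ⟨_, Nat.minFac_prime hi₀, fun j hj =>
    (Nat.minFac_dvd _).trans (hD _ _ (min'_le _ _ (mem_filter.2 ⟨mem_univ j, hj⟩)))⟩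

/-- The multiplicity of `1` among the elementary divisors of `Aₙ` is `n − n/p₁`,
where `p₁` is the least prime divisor of `n`: in any Smith normal form
`U · Aₙ · V = diag(D)` with nonnegative entries `D` in divisibility order, exactly
`n − n/p₁` of the entries equal `1`. -/
theorem multiplicity_one_elementary_divisors (n : ℕ) (hn : 1 < n)
    (U V : Matrix (Fin n) (Fin n) ℤ) (D : Fin n → ℕ)
    (hU : IsUnit U.det) (hV : IsUnit V.det)
    (hSNF : U * Amat n * V = Matrix.diagonal fun j => (D j : ℤ))
    (hdvd : ∀ i j : Fin n, i ≤ j → D i ∣ D j) :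
    (Finset.univ.filter fun j => D j = 1).card = n - n / n.minFac := by
  have hn0 : n ≠ 0 := by omega
  have hp₁ : n.minFac.Prime := Nat.minFac_prime hn.ne'
  have hcount : ∀ q, q.Prime → #{j | q ∣ D j} = if q ∣ n then n / q else 0 := fun q hq => by
    have := Fact.mk hq
    rw [Matrix.card_filter_dvd_eq_sub_rank q D hU hV hSNF, Fintype.card_fin,
      rank_map_Amat (ZMod q) q hn0, Nat.sub_ordCompl_mul_totient_ordProj hq hn0]
  obtain ⟨q, hq, hqD⟩ := exists_prime_forall_dvd_of_ne_one hdvd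
  have hle : #{j | D j ≠ 1} ≤ n / n.minFac :=
    calc #{j | D j ≠ 1} ≤ #{j | q ∣ D j} := card_le_card fun j => by simpa using hqD j
      _ ≤ n / n.minFac := by
        rw [hcount q hq]
        split_ifs with hqn
        · exact Nat.div_le_div_left (Nat.minFac_le_of_dvd hq.two_le hqn) hp₁.pos
        · exact Nat.zero_le _
  have hge : n / n.minFac ≤ #{j | D j ≠ 1} :=
    calc n / n.minFac = #{j | n.minFac ∣ D j} := by rw [hcount _ hp₁, if_pos n.minFac_dvd]
      _ ≤ #{j | D j ≠ 1} := card_le_card fun j => by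
        simp only [mem_filter, mem_univ, true_and]
        exact fun h h1 => hp₁.ne_one (Nat.dvd_one.1 (h1 ▸ h))
  have hsplit := card_filter_add_card_filter_not (s := univ) fun j => D j = 1
  rw [card_univ, Fintype.card_fin] at hsplit
  simp only [← ne_eq] at hsplit
  omega
end

section
/- Let P be a k×k permutation matrix and m, n coprime positive integers. Then there exist integer diagonal matrices D_1, D_2 with gcd(det D_1, m) = 1 and gcd(det D_2, n) = 1 such that det(n D_1 + m D_2 P) = 1. -/
/-!
Write `M(X, Y) = diag X + diag Y · P_σ`. If `σ` is a single cycle, the only permutations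
contributing to the Leibniz expansion of `det M(X, Y)` are `1` and `σ`, so
`det M(X, Y) = ∏ X + sign σ · ∏ Y`. For an `ℓ`-cycle a Bézout relation
`u nˡ + v mˡ = 1` therefore gives a solution with `D₁ = diag(u, 1, …, 1)` and
`D₂ = diag(sign σ · v, 1, …, 1)`. In general `M(X, Y)` is block diagonal along the cycles of `σ`,
and solutions for the blocks glue together.
-/

open Matrix Equiv Finset

namespace Equiv.Perm

variable {β : Type*} [Fintype β] [DecidableEq β]

theorem eq_one_or_eq_of_forall_apply_eq_or_apply_eq {σ τ : Perm β}
    (hσ : ∀ x y, σ.SameCycle x y) (hfix : ∀ x, σ x ≠ x) (hτ : ∀ x, τ x = x ∨ τ x = σ x) :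
    τ = 1 ∨ τ = σ := by
  by_cases h : ∃ a, τ a = σ a
  · obtain ⟨a, ha⟩ := h
    have hpow : ∀ j : ℕ, τ ((σ ^ j) a) = σ ((σ ^ j) a) := by
      intro j
      induction j with
      | zero => exact ha
      | succ j ih =>
        rw [pow_succ', Perm.mul_apply]
        refine (hτ _).resolve_left fun h => hfix ((σ ^ j) a) (τ.injective ?_)
        rw [h, ih]
    refine Or.inr (Perm.ext fun y => ?_)
    obtain ⟨j, rfl⟩ := (hσ a y).exists_nat_pow_eq
    exact hpow j
  · simp only [not_exists] at h
    exact Or.inl (Perm.ext fun x => ((hτ x).resolve_right (h x)))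

end Equiv.Perm

namespace Matrix

variable {R : Type*} [CommRing R] {β : Type*} [Fintype β] [DecidableEq β]

theorem diagonal_add_diagonal_mul_permMatrix_apply (σ : Perm β) (X Y : β → R) (i j : β) :
    (diagonal X + diagonal Y * σ.permMatrix R) i j =
      (if i = j then X i else 0) + (if σ i = j then Y i else 0) := by
  simp [diagonal_apply, Perm.permMatrix, PEquiv.toMatrix_apply]

theorem det_diagonal_add_diagonal_mul_permMatrix_of_sameCycle [Nonempty β] {σ : Perm β}
    (hσ : ∀ x y, σ.SameCycle x y) (X Y : β → R) :
    (diagonal X + diagonal Y * σ.permMatrix R).det = ∏ i, X i + Perm.sign σ • ∏ i, Y i := by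
  by_cases h1 : σ = 1
  · subst h1
    have : Subsingleton β := ⟨fun x y => by simpa using hσ x y⟩
    have : Unique β := uniqueOfSubsingleton (Classical.arbitrary β)
    simp [det_unique]
  have hfix : ∀ x, σ x ≠ x := fun x hx =>
    h1 (Perm.ext fun y => by simpa using ((hσ x y).apply_eq_self_iff).mp hx)
  rw [← det_transpose, det_apply, Fintype.sum_eq_add 1 σ (Ne.symm h1)]
  · simp only [transpose_apply, diagonal_add_diagonal_mul_permMatrix_apply, Perm.one_apply,
      Perm.sign_one, one_smul]
    simp [hfix, fun x => Ne.symm (hfix x)]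
  · rintro τ ⟨hτ1, hτσ⟩
    obtain ⟨i, hi, hiσ⟩ : ∃ i, τ i ≠ i ∧ τ i ≠ σ i := by
      by_contra! h
      exact (Perm.eq_one_or_eq_of_forall_apply_eq_or_apply_eq hσ hfix
        fun i => or_iff_not_imp_left.mpr (h i)).elim hτ1 hτσ
    rw [prod_eq_zero (mem_univ i), smul_zero]
    rw [transpose_apply, diagonal_add_diagonal_mul_permMatrix_apply, if_neg (Ne.symm hi),
      if_neg (Ne.symm hiσ), add_zero]

theorem det_diagonal_add_diagonal_mul_permMatrix_eq_mul {σ : Perm β} (p : β → Prop)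
    [DecidablePred p] (hp : ∀ x, p (σ x) ↔ p x) (X Y : β → R) :
    (diagonal X + diagonal Y * σ.permMatrix R).det =
      (diagonal (fun i : {x // p x} => X i) + diagonal (fun i : {x // p x} => Y i) *
        (σ.subtypePerm hp).permMatrix R).det *
      (diagonal (fun i : {x // ¬p x} => X i) + diagonal (fun i : {x // ¬p x} => Y i) *
        (σ.subtypePerm fun x => not_congr (hp x)).permMatrix R).det := by
  rw [twoBlockTriangular_det _ p]
  · congr 2 <;> ext i j <;>
      simp only [toSquareBlockProp, toBlock_apply, diagonal_add_diagonal_mul_permMatrix_apply,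
        Perm.subtypePerm_apply, Subtype.ext_iff]
  · intro i hi j hj
    rw [diagonal_add_diagonal_mul_permMatrix_apply, if_neg (by rintro rfl; exact hi hj),
      if_neg (by rintro rfl; exact hi ((hp i).mp hj)), add_zero]

end Matrix

namespace Equiv.Perm

variable {R : Type*} [CommRing R] {β : Type*} [Fintype β] [DecidableEq β]

def HasUnimodularDiagonals (a b : R) (σ : Perm β) :
    Prop :=
  ∃ d₁ d₂ : β → R, IsCoprime (∏ i, d₁ i) a ∧ IsCoprime (∏ i, d₂ i) b ∧
    (diagonal (b • d₁) + diagonal (a • d₂) * σ.permMatrix R).det = 1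

variable {a b : R}

theorem HasUnimodularDiagonals.of_subtypePerm {σ : Perm β} {p : β → Prop} [DecidablePred p] (hp : ∀ x, p (σ x) ↔ p x)
    (h : HasUnimodularDiagonals a b (σ.subtypePerm hp))
    (h' : HasUnimodularDiagonals a b
      (σ.subtypePerm fun x => not_congr (hp x) : Perm {x // ¬p x})) :
    HasUnimodularDiagonals a b σ := by
  obtain ⟨f₁, f₂, hf₁, hf₂, hf⟩ := h
  obtain ⟨g₁, g₂, hg₁, hg₂, hg⟩ := h'
  refine ⟨fun x => if hx : p x then f₁ ⟨x, hx⟩ else g₁ ⟨x, hx⟩,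
    fun x => if hx : p x then f₂ ⟨x, hx⟩ else g₂ ⟨x, hx⟩, ?_, ?_, ?_⟩
  · rw [Fintype.prod_dite]
    exact hf₁.mul_left hg₁
  · rw [Fintype.prod_dite]
    exact hf₂.mul_left hg₂
  · rw [det_diagonal_add_diagonal_mul_permMatrix_eq_mul p hp, ← mul_one (1 : R)]
    congr 1
    · rw [← hf]
      congr 4 <;> ext x <;> simp [x.2]
    · rw [← hg]
      congr 4 <;> ext x <;> simp [x.2]

theorem hasUnimodularDiagonals_of_sameCycle [Nonempty β] (hab : IsCoprime a b) {σ : Perm β} (hσ : ∀ x y, σ.SameCycle x y) :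
    HasUnimodularDiagonals a b σ := by
  set ℓ := Fintype.card β
  obtain ⟨v, u, huv⟩ := hab.pow (m := ℓ) (n := ℓ)
  have hℓ : 0 < ℓ := Fintype.card_pos
  set s : R := ((sign σ : ℤ) : R)
  have hs : s * s = 1 := by
    simp only [s, ← Int.cast_mul, ← Units.val_mul, Int.units_mul_self, Units.val_one, Int.cast_one]
  obtain ⟨x⟩ := ‹Nonempty β›
  refine ⟨Pi.mulSingle x u, Pi.mulSingle x (s * v), ?_, ?_, ?_⟩
  · rw [Fintype.prod_pi_mulSingle', ← IsCoprime.pow_right_iff hℓ]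
    exact ⟨b ^ ℓ, v, by linear_combination huv⟩
  · have hv : IsCoprime v (b ^ ℓ) := ⟨a ^ ℓ, u, by linear_combination huv⟩
    rw [Fintype.prod_pi_mulSingle']
    exact IsCoprime.mul_left ⟨s, 0, by linear_combination hs⟩
      ((IsCoprime.pow_right_iff hℓ).mp hv)
  · rw [det_diagonal_add_diagonal_mul_permMatrix_of_sameCycle hσ]
    simp only [Pi.smul_apply, smul_eq_mul, prod_mul_distrib, prod_const, card_univ,
      Fintype.prod_pi_mulSingle', Units.smul_def, zsmul_eq_mul]
    linear_combination (a ^ ℓ * v) * hs + huv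

theorem hasUnimodularDiagonals (hab : IsCoprime a b) (σ : Perm β) : HasUnimodularDiagonals a b σ := by
  induction h : Fintype.card β using Nat.strong_induction_on generalizing β with
  | _ N ih =>
    cases isEmpty_or_nonempty β
    · exact ⟨1, 1, by simp [isCoprime_one_left], by simp [isCoprime_one_left], det_isEmpty⟩
    obtain ⟨x⟩ := ‹Nonempty β›
    have hp : ∀ y, σ.SameCycle x (σ y) ↔ σ.SameCycle x y := fun _ => sameCycle_apply_right
    have : Nonempty {y // σ.SameCycle x y} := ⟨⟨x, SameCycle.refl σ x⟩⟩
    refine HasUnimodularDiagonals.of_subtypePerm hp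
      (hasUnimodularDiagonals_of_sameCycle hab fun y z => ?_)
      (ih _ (h ▸ Fintype.card_subtype_lt (not_not.mpr (SameCycle.refl σ x))) _ rfl)
    rw [sameCycle_subtypePerm]
    exact y.2.symm.trans z.2

end Equiv.Perm

theorem exists_diagonal_det_one_general (k m n : ℕ)
    (hmn : Nat.Coprime m n) (σ : Equiv.Perm (Fin k)) :
    ∃ d₁ d₂ : Fin k → ℤ,
      IsCoprime (Matrix.diagonal d₁).det (m : ℤ) ∧
      IsCoprime (Matrix.diagonal d₂).det (n : ℤ) ∧
      ((n : ℤ) • Matrix.diagonal d₁ +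
        (m : ℤ) • (Matrix.diagonal d₂ * σ.permMatrix ℤ)).det = 1 := by
  obtain ⟨d₁, d₂, h₁, h₂, hdet⟩ := σ.hasUnimodularDiagonals (Nat.isCoprime_iff_coprime.mpr hmn)
  refine ⟨d₁, d₂, by rwa [det_diagonal], by rwa [det_diagonal], ?_⟩
  rwa [← diagonal_smul, ← smul_mul, ← diagonal_smul]

/-- For any permutation matrix `P` (of `σ ∈ S_k`) and coprime `m`, `n`, there are
integer diagonal matrices `D₁`, `D₂` with `gcd(det D₁, m) = 1`, `gcd(det D₂, n) = 1`
and `det(n·D₁ + m·D₂·P) = 1`. -/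
theorem exists_diagonal_det_one (k m n : ℕ) (hm : 0 < m) (hn : 0 < n)
    (hmn : Nat.Coprime m n) (σ : Equiv.Perm (Fin k)) :
    ∃ d₁ d₂ : Fin k → ℤ,
      IsCoprime (Matrix.diagonal d₁).det (m : ℤ) ∧
      IsCoprime (Matrix.diagonal d₂).det (n : ℤ) ∧
      ((n : ℤ) • Matrix.diagonal d₁ +
        (m : ℤ) • (Matrix.diagonal d₂ * σ.permMatrix ℤ)).det = 1 :=
  exists_diagonal_det_one_general k m n hmn σ
end
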